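/- arXiv:2103.13331 — 2 statements merged into one kernel-verified Lean document; each statement's English description precedes it below -/
import Mathlib

section
/- Let H_1, …, H_d be finite hypergraphs on a common finite vertex set V, and let E_1, …, E_m be an enumeration of all their edges, counted with multiplicity across hypergraphs, where E_j belongs to H_{i(j)}. Let x_1, …, x_d be fresh attributes and × a fresh value, and define a relational database 𝔯 over schema R = V ∪ {x_1, …, x_d} consisting of: the all-zero row r_0; for each j ∈ {1,…,m} the row r_j with r_j(a) = j for a ∈ E_j, r_j(x_{i(j)}) = 1, and value 0 on all other attributes; and for each v ∈ V the row r_v with r_v(v) = × and value 0 on all other attributes. Then the minimal, valid, non-trivial functional dependencies of 𝔯 are exactly the dependencies T → x_i where i ∈ {1,…,d} and T ⊆ V is a minimal hitting set of H_i. -/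
open scoped Classical

/-- The functional dependency `X → a` holds in `db`: any two rows that agree on every
attribute of `X` also agree on `a`. -/
def FDHolds {R W : Type*} (db : Set (R → W)) (X : Set R) (a : R) : Prop :=
  ∀ r ∈ db, ∀ s ∈ db, (∀ b ∈ X, r b = s b) → r a = s a

/-- `T` is a hitting set of the hypergraph `H`: it intersects every edge. -/
def IsHittingSet {α : Type*} (H : Set (Set α)) (T : Set α) : Prop :=
  ∀ E ∈ H, (T ∩ E).Nonempty

/-- `T` is an inclusion-wise minimal hitting set of the hypergraph `H`. -/
def IsMinHittingSet {α : Type*} (H : Set (Set α)) (T : Set α) : Prop :=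
  IsHittingSet H T ∧ ∀ T' ⊂ T, ¬ IsHittingSet H T'

/-- The row `r_j` of the reduction, for the edge `E j` belonging to hypergraph
`H (idx j)`: value `j` (encoded as `(j : ℕ) + 1 ∈ {1, …, m}`) on the attributes of `E j`,
value `1` on the fresh attribute `x_{idx j}`, and `0` (i.e. `some 0`) elsewhere. -/
noncomputable def edgeRow {V : Type*} {d m : ℕ} (E : Fin m → Set V) (idx : Fin m → Fin d)
    (j : Fin m) : V ⊕ Fin d → Option ℕ :=
  fun c =>
    match c with
    | Sum.inl a => if a ∈ E j then some ((j : ℕ) + 1) else some 0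
    | Sum.inr i => if i = idx j then some 1 else some 0

/-- The row `r_v` of the reduction: the fresh value `×` (encoded as `none`) in column `v`
and `0` elsewhere. -/
noncomputable def vertexRow {V : Type*} (d : ℕ) (v : V) : V ⊕ Fin d → Option ℕ :=
  fun c => if c = Sum.inl v then none else some 0

/-- The database `𝔯` of the reduction over schema `R = V ∪ {x_1, …, x_d}`:
the all-zero row `r_0`, the rows `r_j` for the edges `E_j`, and the rows `r_v`
for the vertices `v ∈ V`. -/
noncomputable def unionDb {V : Type*} {d m : ℕ} (E : Fin m → Set V)
    (idx : Fin m → Fin d) : Set (V ⊕ Fin d → Option ℕ) :=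
  insert (fun _ => some 0) (Set.range (edgeRow E idx) ∪ Set.range (vertexRow d))

section Aux

variable {V : Type*} {d m : ℕ} (E : Fin m → Set V) (idx : Fin m → Fin d)

lemma mem_db_r0 : (fun _ => some 0 : V ⊕ Fin d → Option ℕ) ∈ unionDb E idx :=
  Set.mem_insert _ _

lemma mem_db_edge (j : Fin m) : edgeRow E idx j ∈ unionDb E idx :=
  Set.mem_insert_of_mem _ (Or.inl ⟨j, rfl⟩)

lemma mem_db_vertex (v : V) : vertexRow d v ∈ unionDb E idx :=
  Set.mem_insert_of_mem _ (Or.inr ⟨v, rfl⟩)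

lemma db_cases {w : V ⊕ Fin d → Option ℕ} (hw : w ∈ unionDb E idx) :
    w = (fun _ => some 0) ∨ (∃ j, w = edgeRow E idx j) ∨ ∃ v, w = vertexRow d v := by
  rw [unionDb, Set.mem_insert_iff, Set.mem_union] at hw
  rcases hw with h | ⟨j, hj⟩ | ⟨v, hv⟩
  · exact Or.inl h
  · exact Or.inr (Or.inl ⟨j, hj.symm⟩)
  · exact Or.inr (Or.inr ⟨v, hv.symm⟩)

lemma not_fd_inl (X : Set (V ⊕ Fin d)) (a : V) (ha : Sum.inl a ∉ X) :
    ¬ FDHolds (unionDb E idx) X (Sum.inl a) := by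
  intro h
  have := h (fun _ => some 0) (mem_db_r0 E idx) (vertexRow d a) (mem_db_vertex E idx a) ?_
  · simp [vertexRow] at this
  · intro b hb
    have hba : b ≠ Sum.inl a := fun hba => ha (hba ▸ hb)
    simp [vertexRow, hba]

lemma agree_edge (i : Fin d) (X : Set (V ⊕ Fin d))
    (h : ∀ j, idx j = i → ∃ a ∈ E j, Sum.inl a ∈ X)
    {j : Fin m} (hj : idx j = i) {s : V ⊕ Fin d → Option ℕ} (hs : s ∈ unionDb E idx)
    (hagree : ∀ b ∈ X, edgeRow E idx j b = s b) :
    s (Sum.inr i) = some 1 := by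
  obtain ⟨a, ha, haX⟩ := h j hj
  have hsa : s (Sum.inl a) = some ((j : ℕ) + 1) := by
    rw [← hagree _ haX]; simp [edgeRow, ha]
  rcases db_cases E idx hs with rfl | ⟨j', rfl⟩ | ⟨v, rfl⟩
  · simp at hsa
  · have hjj : j' = j := by
      by_cases h' : a ∈ E j'
      · simp only [edgeRow, h', if_pos, Option.some.injEq] at hsa
        exact Fin.ext (by omega)
      · simp [edgeRow, h'] at hsa
    subst hjj
    simp [edgeRow, hj]
  · by_cases hav : Sum.inl a = (Sum.inl v : V ⊕ Fin d)
    · simp [vertexRow, hav] at hsa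
    · simp [vertexRow, hav] at hsa

lemma fd_inr_iff (i : Fin d) (X : Set (V ⊕ Fin d)) (hi : Sum.inr i ∉ X) :
    FDHolds (unionDb E idx) X (Sum.inr i) ↔ ∀ j, idx j = i → ∃ a ∈ E j, Sum.inl a ∈ X := by
  constructor
  · intro h j hj
    by_contra hc
    push_neg at hc
    have := h (fun _ => some 0) (mem_db_r0 E idx) (edgeRow E idx j) (mem_db_edge E idx j) ?_
    · simp [edgeRow, hj] at this
    · intro b hb
      cases b with
      | inl a =>
        have haj : a ∉ E j := fun ha => hc a ha hb
        simp [edgeRow, haj]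
      | inr i' =>
        have hne : i' ≠ idx j := by rintro rfl; exact hi (hj ▸ hb)
        simp [edgeRow, hne]
  · intro h r hr s hs hagree
    have key : ∀ w ∈ unionDb E idx,
        w (Sum.inr i) = some 0 ∨ ∃ j, idx j = i ∧ w = edgeRow E idx j := by
      intro w hw
      rcases db_cases E idx hw with rfl | ⟨j, rfl⟩ | ⟨v, rfl⟩
      · exact Or.inl rfl
      · by_cases hj : idx j = i
        · exact Or.inr ⟨j, hj, rfl⟩
        · left
          have hne : ¬ i = idx j := fun h' => hj h'.symm
          simp [edgeRow, hne]
      · left; simp [vertexRow]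
    rcases key r hr with h0r | ⟨j, hj, rfl⟩
    · rcases key s hs with h0s | ⟨j, hj, rfl⟩
      · rw [h0r, h0s]
      · have := agree_edge E idx i X h hj hr (fun b hb => (hagree b hb).symm)
        rw [h0r] at this; simp at this
    · have := agree_edge E idx i X h hj hs hagree
      rw [this]; simp [edgeRow, hj]

end Aux

/-- Let `H_1, …, H_d` be finite hypergraphs on a common finite vertex set `V`, whose edges
`E_1, …, E_m` are enumerated with multiplicity (`E_j` belongs to `H_{idx j}`), and let `𝔯`
be the database of the reduction over `R = V ∪ {x_1, …, x_d}`. Then the minimal, valid,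
non-trivial functional dependencies of `𝔯` are exactly the dependencies `T → x_i` where
`T ⊆ V` is a minimal hitting set of `H_i`. -/
theorem minimal_fds_of_unionDb {V : Type*} [Fintype V] (d m : ℕ)
    (E : Fin m → Set V) (idx : Fin m → Fin d)
    (H : Fin d → Set (Set V)) (hH : ∀ i, H i = {S | ∃ j, idx j = i ∧ E j = S}) :
    ∀ (X : Set (V ⊕ Fin d)) (c : V ⊕ Fin d),
      (c ∉ X ∧ FDHolds (unionDb E idx) X c ∧
          ∀ X' ⊂ X, ¬ FDHolds (unionDb E idx) X' c) ↔
        (∃ (i : Fin d) (T : Set V),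
          c = Sum.inr i ∧ X = Sum.inl '' T ∧ IsMinHittingSet (H i) T) := by
  intro X c
  constructor
  · rintro ⟨hcX, hfd, hmin⟩
    cases c with
    | inl a => exact absurd hfd (not_fd_inl E idx X a hcX)
    | inr i =>
      have hXinl : ∀ i' : Fin d, Sum.inr i' ∉ X := by
        intro i' hi'
        have hne : i' ≠ i := fun h => hcX (h ▸ hi')
        have hsub : X \ {Sum.inr i'} ⊂ X :=
          ⟨Set.diff_subset, fun hsup => (hsup hi').2 rfl⟩
        refine hmin _ hsub ?_
        rw [fd_inr_iff E idx i _ (fun h => hcX h.1)]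
        intro j hj
        obtain ⟨a, ha, haX⟩ := (fd_inr_iff E idx i X hcX).mp hfd j hj
        exact ⟨a, ha, haX, by simp⟩
      set T : Set V := {a | Sum.inl a ∈ X} with hT
      have hXT : X = Sum.inl '' T := by
        ext b
        cases b with
        | inl a => simp [hT]
        | inr i' => simp [hXinl i']
      refine ⟨i, T, rfl, hXT, ?_, ?_⟩
      · intro S hS
        rw [hH] at hS
        obtain ⟨j, hj, rfl⟩ := hS
        obtain ⟨a, ha, haX⟩ := (fd_inr_iff E idx i X hcX).mp hfd j hj
        exact ⟨a, haX, ha⟩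
      · intro T' hT' hhit
        have hsub : Sum.inl '' T' ⊂ X := by
          rw [hXT]
          exact ⟨(Set.image_subset_image_iff Sum.inl_injective).mpr hT'.1,
            fun hsup => hT'.2 ((Set.image_subset_image_iff Sum.inl_injective).mp hsup)⟩
        refine hmin _ hsub ?_
        rw [fd_inr_iff E idx i _ (by simp)]
        intro j hj
        obtain ⟨a, haT, ha⟩ := hhit (E j) (by rw [hH]; exact ⟨j, hj, rfl⟩)
        exact ⟨a, ha, Set.mem_image_of_mem _ haT⟩
  · rintro ⟨i, T, rfl, rfl, hhit, hminT⟩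
    have hiX : Sum.inr i ∉ Sum.inl '' T := by simp
    refine ⟨hiX, ?_, ?_⟩
    · rw [fd_inr_iff E idx i _ hiX]
      intro j hj
      obtain ⟨a, haT, ha⟩ := hhit (E j) (by rw [hH]; exact ⟨j, hj, rfl⟩)
      exact ⟨a, ha, Set.mem_image_of_mem _ haT⟩
    · intro X' hX' hfd'
      set T' : Set V := {a | Sum.inl a ∈ X'} with hT'
      have hX'T' : X' = Sum.inl '' T' := by
        ext b
        constructor
        · intro hb
          obtain ⟨a, haT, rfl⟩ := hX'.1 hb
          exact ⟨a, hb, rfl⟩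
        · rintro ⟨a, ha, rfl⟩
          exact ha
      have hT'T : T' ⊂ T := by
        rw [hX'T'] at hX'
        exact ⟨(Set.image_subset_image_iff Sum.inl_injective).mp hX'.1,
          fun hsup => hX'.2 ((Set.image_subset_image_iff Sum.inl_injective).mpr hsup)⟩
      refine hminT T' hT'T ?_
      intro S hS
      rw [hH] at hS
      obtain ⟨j, hj, rfl⟩ := hS
      have hi' : Sum.inr i ∉ X' := fun h => by
        obtain ⟨a, _, ha⟩ := hX'.1 h
        exact Sum.inl_ne_inr ha
      obtain ⟨a, ha, haX'⟩ := (fd_inr_iff E idx i X' hi').mp hfd' j hj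
      exact ⟨a, haX', ha⟩
end

section
/- In the construction of the previous statement (database 𝔯 over R = V ∪ {x_1,…,x_d} built from hypergraphs H_1,…,H_d with rows r_0, r_j for edges E_j, and r_v for vertices v ∈ V), for each i ∈ {1,…,d} the hypergraph of punctured difference sets 𝒟_{x_i} = {D(r,s) \ {x_i} : r, s ∈ 𝔯, r(x_i) ≠ s(x_i)} satisfies min(𝒟_{x_i}) = min(H_i); consequently, 𝒟_{x_i} and H_i have the same minimal hitting sets. -/
open scoped Classical

/-- The difference set of two rows: the attributes on which they disagree. -/
def diffSet {R W : Type*} (r s : R → W) : Set R := {b | r b ≠ s b}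

/-- The minimization of a hypergraph: its inclusion-wise minimal edges. -/
def minEdges {α : Type*} (H : Set (Set α)) : Set (Set α) :=
  {E ∈ H | ∀ E' ∈ H, E' ⊆ E → E' = E}

/-- The hypergraph `𝒟_{x_i}` of punctured difference sets of the database of the
reduction: `{D(r,s) \ {x_i} : r, s ∈ 𝔯, r(x_i) ≠ s(x_i)}`. -/
noncomputable def puncturedDiffSetsAt {V : Type*} {d m : ℕ} (E : Fin m → Set V)
    (idx : Fin m → Fin d) (i : Fin d) : Set (Set (V ⊕ Fin d)) :=
  {D | ∃ r ∈ unionDb E idx, ∃ s ∈ unionDb E idx,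
    r (Sum.inr i) ≠ s (Sum.inr i) ∧ D = diffSet r s \ {Sum.inr i}}

/-!
A pair of rows that differ at `x_i` must consist of a row `r_j` with `E_j ∈ H_i` and a row
that is `0` at `x_i`; since the value `j` occurs in no other row, their difference set contains
`E_j`, and the pair `r_j, r_0` realises exactly `E_j`. So `𝒟_{x_i}` contains (the copy of) `H_i`
and each of its edges contains an edge of `H_i`; two such hypergraphs have the same minimal
edges and the same hitting sets.
-/

section Hypergraph

variable {α β : Type*}

theorem minEdges_eq_setOf_minimal (H : Set (Set α)) :
    minEdges H = {E | Minimal (· ∈ H) E} := by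
  ext E
  simp only [minEdges, minimal_iff, Set.mem_ofPred_eq]
  exact and_congr_right fun _ => forall₂_congr fun _ _ => forall_congr' fun _ => eq_comm

theorem minEdges_image_image {f : α → β} (hf : Function.Injective f) (H : Set (Set α)) :
    minEdges ((f '' ·) '' H) = (f '' ·) '' minEdges H := by
  rw [minEdges_eq_setOf_minimal, minEdges_eq_setOf_minimal,
    image_monotone_setOfPred_minimal_mem fun _ _ _ _ => Set.image_subset_image_iff hf]

theorem minEdges_eq_of_subset_of_forall_exists_subset {𝒢 𝒟 : Set (Set α)} (hsub : 𝒢 ⊆ 𝒟)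
    (hdom : ∀ D ∈ 𝒟, ∃ G ∈ 𝒢, G ⊆ D) : minEdges 𝒟 = minEdges 𝒢 := by
  simp only [minEdges_eq_setOf_minimal]
  ext D
  exact minimal_iff_minimal_of_imp_of_forall (fun _ hG => hsub hG) fun D hD =>
    (hdom D hD).imp fun _ ⟨hG, hGD⟩ => ⟨hGD, hG⟩

theorem isHittingSet_iff_of_subset_of_forall_exists_subset {𝒢 𝒟 : Set (Set α)}
    (hsub : 𝒢 ⊆ 𝒟) (hdom : ∀ D ∈ 𝒟, ∃ G ∈ 𝒢, G ⊆ D) (T : Set α) :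
    IsHittingSet 𝒟 T ↔ IsHittingSet 𝒢 T := by
  refine ⟨fun hT G hG => hT G (hsub hG), fun hT D hD => ?_⟩
  obtain ⟨G, hG, hGD⟩ := hdom D hD
  exact (hT G hG).mono (Set.inter_subset_inter_right T hGD)

theorem isMinHittingSet_congr {𝒢 𝒟 : Set (Set α)}
    (h : ∀ T, IsHittingSet 𝒟 T ↔ IsHittingSet 𝒢 T) (T : Set α) :
    IsMinHittingSet 𝒟 T ↔ IsMinHittingSet 𝒢 T := by
  simp only [IsMinHittingSet, h]

end Hypergraph

section Reduction

variable {V : Type*} {d m : ℕ} {E : Fin m → Set V} {idx : Fin m → Fin d}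

theorem diffSet_comm {R W : Type*} (r s : R → W) : diffSet r s = diffSet s r := by
  ext b
  exact ne_comm

theorem mem_unionDb_iff {r : V ⊕ Fin d → Option ℕ} :
    r ∈ unionDb E idx ↔ r = (fun _ => some 0) ∨ (∃ j, r = edgeRow E idx j) ∨
      ∃ v, r = vertexRow d v := by
  simp [unionDb, eq_comm]

theorem apply_inr_eq_zero_or_eq_edgeRow {r : V ⊕ Fin d → Option ℕ} (hr : r ∈ unionDb E idx)
    (i : Fin d) : r (Sum.inr i) = some 0 ∨ ∃ j, idx j = i ∧ r = edgeRow E idx j := by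
  rcases mem_unionDb_iff.mp hr with rfl | ⟨j, rfl⟩ | ⟨v, rfl⟩
  · exact Or.inl rfl
  · by_cases h : idx j = i
    · exact Or.inr ⟨j, h, rfl⟩
    · exact Or.inl (by simp [edgeRow, Ne.symm h])
  · exact Or.inl (by simp [vertexRow])

theorem eq_edgeRow_of_apply_inl_eq {s : V ⊕ Fin d → Option ℕ} (hs : s ∈ unionDb E idx)
    {a : V} {j : Fin m} (h : s (Sum.inl a) = some ((j : ℕ) + 1)) : s = edgeRow E idx j := by
  rcases mem_unionDb_iff.mp hs with rfl | ⟨j', rfl⟩ | ⟨v, rfl⟩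
  · simp at h
  · by_cases ha : a ∈ E j' <;> simp_all [edgeRow, Fin.val_inj]
  · by_cases hav : a = v <;> simp_all [vertexRow]

theorem image_edge_subset_diffSet_edgeRow {s : V ⊕ Fin d → Option ℕ} (hs : s ∈ unionDb E idx)
    {j : Fin m} (hsj : s ≠ edgeRow E idx j) : Sum.inl '' E j ⊆ diffSet (edgeRow E idx j) s := by
  rintro _ ⟨a, ha, rfl⟩ h
  simp only [edgeRow, if_pos ha] at h
  exact hsj (eq_edgeRow_of_apply_inl_eq hs h.symm)

theorem image_edge_subset_puncturedDiffSet {s : V ⊕ Fin d → Option ℕ} (hs : s ∈ unionDb E idx)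
    {i : Fin d} {j : Fin m} (hsi : edgeRow E idx j (Sum.inr i) ≠ s (Sum.inr i)) :
    Sum.inl '' E j ⊆ diffSet (edgeRow E idx j) s \ {Sum.inr i} := by
  refine Set.subset_sdiff_singleton ?_ (by simp)
  exact image_edge_subset_diffSet_edgeRow hs fun h => hsi (by rw [h])

theorem image_edge_mem_puncturedDiffSetsAt {i : Fin d} {j : Fin m} (hj : idx j = i) :
    Sum.inl '' E j ∈ puncturedDiffSetsAt E idx i := by
  refine ⟨edgeRow E idx j, Set.mem_insert_of_mem _ (Or.inl ⟨j, rfl⟩), fun _ => some 0,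
    Set.mem_insert _ _, by simp [edgeRow, hj], ?_⟩
  ext (a | i')
  · by_cases ha : a ∈ E j <;> simp [diffSet, edgeRow, ha]
  · simp [diffSet, edgeRow, hj]

theorem exists_image_edge_subset_of_mem_puncturedDiffSetsAt {i : Fin d}
    {D : Set (V ⊕ Fin d)} (hD : D ∈ puncturedDiffSetsAt E idx i) :
    ∃ j, idx j = i ∧ Sum.inl '' E j ⊆ D := by
  obtain ⟨r, hr, s, hs, hne, rfl⟩ := hD
  rcases apply_inr_eq_zero_or_eq_edgeRow hr i with hr0 | ⟨j, hj, rfl⟩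
  · rcases apply_inr_eq_zero_or_eq_edgeRow hs i with hs0 | ⟨j, hj, rfl⟩
    · exact absurd (hr0.trans hs0.symm) hne
    · rw [diffSet_comm]
      exact ⟨j, hj, image_edge_subset_puncturedDiffSet hr hne.symm⟩
  · exact ⟨j, hj, image_edge_subset_puncturedDiffSet hs hne⟩

end Reduction

theorem minEdges_puncturedDiffSetsAt_general {V : Type*} (d m : ℕ)
    (E : Fin m → Set V) (idx : Fin m → Fin d)
    (H : Fin d → Set (Set V)) (hH : ∀ i, H i = {S | ∃ j, idx j = i ∧ E j = S})
    (i : Fin d) :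
    minEdges (puncturedDiffSetsAt E idx i) =
        (fun S : Set V => Sum.inl '' S) '' minEdges (H i) ∧
      ∀ T : Set (V ⊕ Fin d),
        IsMinHittingSet (puncturedDiffSetsAt E idx i) T ↔
          IsMinHittingSet ((fun S : Set V => Sum.inl '' S) '' H i) T := by
  have hsub : (fun S : Set V => Sum.inl '' S) '' H i ⊆ puncturedDiffSetsAt E idx i := by
    rintro _ ⟨_, hS, rfl⟩
    rw [hH] at hS
    obtain ⟨j, hj, rfl⟩ := hS
    exact image_edge_mem_puncturedDiffSetsAt hj
  have hdom : ∀ D ∈ puncturedDiffSetsAt E idx i,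
      ∃ G ∈ (fun S : Set V => Sum.inl '' S) '' H i, G ⊆ D := by
    intro D hD
    obtain ⟨j, hj, hjD⟩ := exists_image_edge_subset_of_mem_puncturedDiffSetsAt hD
    exact ⟨_, ⟨E j, (hH i).symm ▸ ⟨j, hj, rfl⟩, rfl⟩, hjD⟩
  refine ⟨?_, isMinHittingSet_congr (isHittingSet_iff_of_subset_of_forall_exists_subset hsub hdom)⟩
  rw [minEdges_eq_of_subset_of_forall_exists_subset hsub hdom]
  exact minEdges_image_image Sum.inl_injective (H i)

/-- In the construction of the database `𝔯` from hypergraphs `H_1, …, H_d`, for each `i`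
the hypergraph `𝒟_{x_i}` of punctured difference sets satisfies
`min(𝒟_{x_i}) = min(H_i)` (identifying `H_i` with its copy on the schema
`V ∪ {x_1, …, x_d}` via the embedding of `V`); consequently, `𝒟_{x_i}` and `H_i` have
the same minimal hitting sets. -/
theorem minEdges_puncturedDiffSetsAt {V : Type*} [Fintype V] (d m : ℕ)
    (E : Fin m → Set V) (idx : Fin m → Fin d)
    (H : Fin d → Set (Set V)) (hH : ∀ i, H i = {S | ∃ j, idx j = i ∧ E j = S})
    (i : Fin d) :
    minEdges (puncturedDiffSetsAt E idx i) =
        (fun S : Set V => Sum.inl '' S) '' minEdges (H i) ∧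
      ∀ T : Set (V ⊕ Fin d),
        IsMinHittingSet (puncturedDiffSetsAt E idx i) T ↔
          IsMinHittingSet ((fun S : Set V => Sum.inl '' S) '' H i) T :=
  minEdges_puncturedDiffSetsAt_general d m E idx H hH i
end
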